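/- arXiv:1911.08238 — 2 statements merged into one kernel-verified Lean document; each statement's English description precedes it below -/
import Mathlib

section
/- Let (B, L, θ) be a Boolean dynamical system and (α, A) a cycle with no exits. Fix 1 ≤ k < |α| and let α' = α₁⋯α_k. If B ∩ θ_{α'}(B) ≠ ∅ for every non-empty B ⊆ A, then (α', A ∩ θ_{α'}(A)) is a cycle with no exits. -/
/-- An ideal of a (generalized) Boolean algebra: a non-empty subset closed under
union and under intersection with arbitrary elements. -/
def IsBoolIdeal {B : Type*} [GeneralizedBooleanAlgebra B] (I : Set B) : Prop :=
  I.Nonempty ∧ (∀ a ∈ I, ∀ b ∈ I, a ⊔ b ∈ I) ∧ (∀ a ∈ I, ∀ b : B, a ⊓ b ∈ I)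

/-- A filter in a (generalized) Boolean algebra. -/
def IsBoolFilter {B : Type*} [GeneralizedBooleanAlgebra B] (ξ : Set B) : Prop :=
  ξ.Nonempty ∧ ⊥ ∉ ξ ∧ (∀ a ∈ ξ, ∀ b : B, a ≤ b → b ∈ ξ) ∧ (∀ a ∈ ξ, ∀ b ∈ ξ, a ⊓ b ∈ ξ)

/-- An ultrafilter of a (generalized) Boolean algebra. -/
def IsBoolUltrafilter {B : Type*} [GeneralizedBooleanAlgebra B] (ξ : Set B) : Prop :=
  IsBoolFilter ξ ∧ ∀ a ∈ ξ, ∀ b b' : B, a = b ⊔ b' → b ∈ ξ ∨ b' ∈ ξ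

/-- The relation `A ~ B ⟺ A ∪ A' = B ∪ B'` for some `A', B' ∈ I`. -/
def relI {B : Type*} [GeneralizedBooleanAlgebra B] (I : Set B) (a b : B) : Prop :=
  ∃ a' ∈ I, ∃ b' ∈ I, a ⊔ a' = b ⊔ b'

/-- The action of a finite word `α ∈ L*`: `θ_α = θ_{α_n} ∘ ⋯ ∘ θ_{α_1}`. -/
def wordAct {B L : Type*} (θ : L → B → B) (α : List L) (A : B) : B :=
  α.foldl (fun x a => θ a x) A

/-- `α^k`: the word `α` concatenated with itself `k` times. -/
def wordPow {L : Type*} (α : List L) (k : ℕ) : List L := (List.replicate k α).flatten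

/-- A Boolean dynamical system: a Boolean algebra `B`, a set `L`, and actions
`θ_a` on `B` (Boolean homomorphisms with `θ_a ⊥ = ⊥`) such that each word
action has compact range and closed domain. -/
structure BoolDynSys (B L : Type*) [GeneralizedBooleanAlgebra B] where
  θ : L → B → B
  map_inf : ∀ (a : L) (A A' : B), θ a (A ⊓ A') = θ a A ⊓ θ a A'
  map_sup : ∀ (a : L) (A A' : B), θ a (A ⊔ A') = θ a A ⊔ θ a A'
  map_sdiff : ∀ (a : L) (A A' : B), θ a (A \ A') = θ a A \ θ a A'
  map_bot : ∀ a : L, θ a ⊥ = ⊥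
  compactRange : ∀ α : List L, α ≠ [] → ∃ R : B, IsLUB (Set.range (wordAct θ α)) R
  closedDomain : ∀ α : List L, α ≠ [] → ∀ R : B, IsLUB (Set.range (wordAct θ α)) R →
      ∃ D : B, wordAct θ α D = R

section BDS
variable {B L : Type*} [GeneralizedBooleanAlgebra B]

/-- `Δ_A = {a ∈ L : θ_a(A) ≠ ∅}`. -/
def DeltaSet (S : BoolDynSys B L) (A : B) : Set L := {a : L | S.θ a A ≠ ⊥}

/-- `A` is regular if every non-empty `C ⊆ A` has `0 < |Δ_C| < ∞`. -/
def RegularElt (S : BoolDynSys B L) (A : B) : Prop :=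
  ∀ C : B, C ≤ A → C ≠ ⊥ → (DeltaSet S C).Finite ∧ (DeltaSet S C).Nonempty

/-- An ultrafilter cycle `(α, η)`: `θ_α(A) ∈ η` for all `A ∈ η`. -/
def IsUFCycle (S : BoolDynSys B L) (α : List L) (η : Set B) : Prop :=
  α ≠ [] ∧ IsBoolUltrafilter η ∧ ∀ A ∈ η, wordAct S.θ α A ∈ η

/-- A cycle `(α, A)`: `θ_α(C) = C` for all `C ⊆ A`. -/
def IsCycle (S : BoolDynSys B L) (α : List L) (A : B) : Prop :=
  α ≠ [] ∧ A ≠ ⊥ ∧ ∀ C : B, C ≤ A → wordAct S.θ α C = C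

/-- The cycle `(α, A)` has no exits: for all `t ≤ |α|` and all non-empty
`C ⊆ θ_{α₁⋯α_t}(A)`, `C` is regular with `Δ_C = {α_{t+1}}` (indices mod `|α|`). -/
def NoExits (S : BoolDynSys B L) (α : List L) (A : B) : Prop :=
  ∀ t : ℕ, ∀ _h1 : 1 ≤ t, ∀ h2 : t ≤ α.length, ∀ C : B, C ≠ ⊥ →
    C ≤ wordAct S.θ (α.take t) A →
    RegularElt S C ∧
      DeltaSet S C = {α.get ⟨t % α.length, Nat.mod_lt t (Nat.lt_of_lt_of_le _h1 h2)⟩}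

/-- The cycle `(α, A)` has an exit. -/
def HasExit (S : BoolDynSys B L) (α : List L) (A : B) : Prop :=
  ∃ t : ℕ, ∃ _h1 : 1 ≤ t, ∃ h2 : t ≤ α.length, ∃ C : B, C ≠ ⊥ ∧
    C ≤ wordAct S.θ (α.take t) A ∧
    DeltaSet S C ≠ {α.get ⟨t % α.length, Nat.mod_lt t (Nat.lt_of_lt_of_le _h1 h2)⟩}

/-- Condition (L): every cycle has an exit. -/
def ConditionL (S : BoolDynSys B L) : Prop :=
  ∀ (α : List L) (A : B), IsCycle S α A → HasExit S α A

/-- A hereditary subset: closed under the actions. -/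
def IsHereditary (S : BoolDynSys B L) (H : Set B) : Prop :=
  ∀ A ∈ H, ∀ a : L, S.θ a A ∈ H

/-- A saturated subset: `A ∈ H` whenever `A` is regular and `θ_a(A) ∈ H` for all `a`. -/
def IsSaturated (S : BoolDynSys B L) (H : Set B) : Prop :=
  ∀ A : B, RegularElt S A → (∀ a : L, S.θ a A ∈ H) → A ∈ H

/-- A maximal tail: conditions (T0)–(T5). -/
def IsMaximalTail (S : BoolDynSys B L) (T : Set B) : Prop :=
  T.Nonempty ∧
  (⊥ ∉ T) ∧
  (∀ A : B, ∀ a : L, S.θ a A ∈ T → A ∈ T) ∧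
  (∀ A C : B, A ⊔ C ∈ T → A ∈ T ∨ C ∈ T) ∧
  (∀ A ∈ T, ∀ C : B, A ≤ C → C ∈ T) ∧
  (∀ A ∈ T, RegularElt S A → ∃ a : L, S.θ a A ∈ T) ∧
  (∀ A₁ ∈ T, ∀ A₂ ∈ T, ∃ C ∈ T,
      (∃ α : List L, C ≤ wordAct S.θ α A₁) ∧ (∃ β : List L, C ≤ wordAct S.θ β A₂))

/-- A cyclic maximal tail. -/
def IsCyclicMaximalTail (S : BoolDynSys B L) (T : Set B) : Prop :=
  IsMaximalTail S T ∧
  ∃ (α : List L) (η : Set B) (A : B), IsUFCycle S α η ∧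
    T = {C : B | ∃ β : List L, wordAct S.θ β C ∈ η} ∧ A ∈ η ∧
    ∀ β : List L, β ≠ [] → ∀ C : B, C ≤ A → wordAct S.θ β C ∈ η →
      C ∈ η ∧ ∃ k : ℕ, 0 < k ∧ β = wordPow α k

/-- Condition (K). -/
def ConditionK (S : BoolDynSys B L) : Prop :=
  ¬ ∃ (α : List L) (η : Set B) (A : B), IsUFCycle S α η ∧ A ∈ η ∧
    ∀ β : List L, β ≠ [] → ∀ C : B, C ≤ A → wordAct S.θ β C ∈ η →
      C ∈ η ∧ ∃ k : ℕ, 0 < k ∧ β = wordPow α k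

/-! Notions for the quotient Boolean dynamical system `(B/H, L, θ)` (for a
hereditary saturated ideal `H`), expressed in terms of representatives in `B`. -/

/-- `[C] ⊆ [B']` in `B/H`. -/
def qle (H : Set B) (C A : B) : Prop := ∃ W ∈ H, C ≤ A ⊔ W

/-- `Δ_{[C]}` in `B/H`. -/
def QDelta (S : BoolDynSys B L) (H : Set B) (C : B) : Set L := {a : L | S.θ a C ∉ H}

/-- `[A]` is regular in `B/H`. -/
def QRegular (S : BoolDynSys B L) (H : Set B) (A : B) : Prop :=
  ∀ C : B, C ∉ H → qle H C A → (QDelta S H C).Finite ∧ (QDelta S H C).Nonempty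

/-- `(α, [A])` is a cycle in the quotient `(B/H, L, θ)`. -/
def QCycle (S : BoolDynSys B L) (H : Set B) (α : List L) (A : B) : Prop :=
  α ≠ [] ∧ A ∉ H ∧ ∀ C : B, qle H C A → relI H (wordAct S.θ α C) C

/-- The cycle `(α, [A])` has an exit in the quotient `(B/H, L, θ)`. -/
def QHasExit (S : BoolDynSys B L) (H : Set B) (α : List L) (A : B) : Prop :=
  ∃ t : ℕ, ∃ _h1 : 1 ≤ t, ∃ h2 : t ≤ α.length, ∃ C : B, C ∉ H ∧
    qle H C (wordAct S.θ (α.take t) A) ∧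
    QDelta S H C ≠ {α.get ⟨t % α.length, Nat.mod_lt t (Nat.lt_of_lt_of_le _h1 h2)⟩}

/-- The quotient `(B/H, L, θ)` satisfies Condition (L). -/
def QConditionL (S : BoolDynSys B L) (H : Set B) : Prop :=
  ∀ (α : List L) (A : B), QCycle S H α A → QHasExit S H α A

end BDS

/-!
The prefix `f = θ_{α₁⋯α_k}` and the suffix `g = θ_{α_{k+1}⋯α_n}` satisfy `g ∘ f = id` below `A`
because `(α, A)` is a cycle. Since the cycle has no exits, `g` kills no non-empty element below
`f(A)`; for a map preserving `\` this makes `g` injective there, so also `f ∘ g = id` below `f(A)`.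
For `C ≤ A ∩ f(A)`, the pieces `C \ g(C)` and `g(C) \ C` lie in `A` and are disjoint from their
images `f(C) \ C` and `C \ f(C)`, so the hypothesis on `θ_{α'}` forces both to vanish: `g(C) = C`,
whence `f(C) = C`. The exit condition for `α'` is read off from that of `α`, using `θ_{α'}` = id
on `A ∩ f(A)` for the last position.
-/

section SdiffMap
variable {B : Type*} [GeneralizedBooleanAlgebra B] {f g : B → B}

theorem map_bot_of_map_sdiff (hf : ∀ x y, f (x \ y) = f x \ f y) : f ⊥ = ⊥ := by
  simpa using hf ⊥ ⊥

theorem monotone_of_map_sdiff (hf : ∀ x y, f (x \ y) = f x \ f y) : Monotone f := by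
  intro x y h
  rw [← sdiff_eq_bot_iff] at h ⊢
  rw [← hf, h, map_bot_of_map_sdiff hf]

theorem le_of_map_eq_of_map_sdiff (hf : ∀ x y, f (x \ y) = f x \ f y) {Z X Y : B}
    (hker : ∀ x ≤ Z, x ≠ ⊥ → f x ≠ ⊥) (hX : X ≤ Z) (h : f X = f Y) : X ≤ Y := by
  rw [← sdiff_eq_bot_iff]
  by_contra hne
  exact hker _ (sdiff_le.trans hX) hne (by rw [hf, h, sdiff_self])

theorem leftInvOn_of_map_sdiff (hf : ∀ x y, f (x \ y) = f x \ f y)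
    (hg : ∀ x y, g (x \ y) = g x \ g y) {A : B} (hgf : Set.LeftInvOn g f (Set.Iic A))
    (hker : ∀ y ≤ f A, y ≠ ⊥ → g y ≠ ⊥) : Set.LeftInvOn f g (Set.Iic (f A)) := by
  intro y (hy : y ≤ f A)
  have hgy : g y ≤ A := (monotone_of_map_sdiff hg hy).trans_eq (hgf (le_refl A))
  have hfgy : f (g y) ≤ f A := monotone_of_map_sdiff hf hgy
  have hgfg : g (f (g y)) = g y := hgf hgy
  exact le_antisymm (le_of_map_eq_of_map_sdiff hg hker hfgy hgfg)
    (le_of_map_eq_of_map_sdiff hg hker hy hgfg.symm)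

theorem map_eq_self_of_inf_map_ne_bot (hf : ∀ x y, f (x \ y) = f x \ f y)
    (hg : ∀ x y, g (x \ y) = g x \ g y) {A : B} (hgf : Set.LeftInvOn g f (Set.Iic A))
    (hfg : Set.LeftInvOn f g (Set.Iic (f A)))
    (hmeet : ∀ D : B, D ≠ ⊥ → D ≤ A → D ⊓ f D ≠ ⊥) :
    ∀ C ≤ A ⊓ f A, f C = C := by
  intro C hC
  have hCA : C ≤ A := hC.trans inf_le_left
  have hgC : g C ≤ A := (monotone_of_map_sdiff hg (hC.trans inf_le_right)).trans_eq (hgf le_rfl)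
  have hfgC : f (g C) = C := hfg (hC.trans inf_le_right)
  have hvanish : ∀ D ≤ A, Disjoint D (f D) → D = ⊥ := fun D hD hdisj => by
    by_contra hD0
    exact hmeet D hD0 hD hdisj.eq_bot
  have hle : C ≤ g C := sdiff_eq_bot_iff.mp <| hvanish _ (sdiff_le.trans hCA) <| by
    rw [hf, hfgC]
    exact disjoint_sdiff_self_right.mono_left sdiff_le
  have hge : g C ≤ C := sdiff_eq_bot_iff.mp <| hvanish _ (sdiff_le.trans hgC) <| by
    rw [hf, hfgC]
    exact disjoint_sdiff_self_left.mono_right sdiff_le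
  rwa [le_antisymm hge hle] at hfgC

end SdiffMap

section WordAct
variable {B L : Type*}

theorem wordAct_append (θ : L → B → B) (l₁ l₂ : List L) (A : B) :
    wordAct θ (l₁ ++ l₂) A = wordAct θ l₂ (wordAct θ l₁ A) :=
  List.foldl_append

theorem wordAct_cons (θ : L → B → B) (a : L) (l : List L) (A : B) :
    wordAct θ (a :: l) A = wordAct θ l (θ a A) := rfl

theorem wordAct_take_succ (θ : L → B → B) {α : List L} {t : ℕ} (ht : t < α.length) (A : B) :
    wordAct θ (α.take (t + 1)) A = θ α[t] (wordAct θ (α.take t) A) := by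
  rw [List.take_add_one, List.getElem?_eq_getElem ht, Option.toList_some, wordAct_append]
  rfl

theorem wordAct_sdiff [GeneralizedBooleanAlgebra B] (S : BoolDynSys B L) (l : List L) (X Y : B) :
    wordAct S.θ l (X \ Y) = wordAct S.θ l X \ wordAct S.θ l Y := by
  induction l generalizing X Y with
  | nil => rfl
  | cons a l ih => rw [wordAct_cons, S.map_sdiff, ih, wordAct_cons, wordAct_cons]

end WordAct

namespace NoExits
variable {B L : Type*} [GeneralizedBooleanAlgebra B] {S : BoolDynSys B L} {α : List L} {A : B}

theorem mono (hne : NoExits S α A) {A' : B} (hA' : A' ≤ A) : NoExits S α A' :=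
  fun t ht1 ht2 C hC hle =>
    hne t ht1 ht2 C hC (hle.trans (monotone_of_map_sdiff (wordAct_sdiff S _) hA'))

theorem map_getElem_ne_bot (hne : NoExits S α A) {t : ℕ} (ht1 : 1 ≤ t) (ht : t < α.length)
    {C : B} (hC : C ≠ ⊥) (hle : C ≤ wordAct S.θ (α.take t) A) : S.θ α[t] C ≠ ⊥ := by
  show α[t] ∈ DeltaSet S C
  simp [(hne t ht1 ht.le C hC hle).2, Nat.mod_eq_of_lt ht]

theorem wordAct_drop_ne_bot (hne : NoExits S α A) {t : ℕ} (ht1 : 1 ≤ t) {C : B} (hC : C ≠ ⊥)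
    (hle : C ≤ wordAct S.θ (α.take t) A) : wordAct S.θ (α.drop t) C ≠ ⊥ := by
  rcases le_or_gt α.length t with hlen | hlt
  · rwa [List.drop_of_length_le hlen]
  · rw [List.drop_eq_getElem_cons hlt, wordAct_cons]
    refine hne.wordAct_drop_ne_bot (ht1.trans t.le_succ) (hne.map_getElem_ne_bot ht1 hlt hC hle) ?_
    rw [wordAct_take_succ S.θ hlt]
    exact monotone_of_map_sdiff (S.map_sdiff _) hle
termination_by α.length - t

/-- Position `t ≤ k` of `α₁⋯α_k` is position `t` of `α` for `t < k`, and position `|α|` of `α`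
(where `θ_α` returns to `A`) for `t = k`; both are followed by the letter `α_{(t mod k) + 1}`. -/
theorem take (hne : NoExits S α A) {k : ℕ} (hk : k ≤ α.length) (hA : wordAct S.θ α A = A)
    (hAk : wordAct S.θ (α.take k) A = A) : NoExits S (α.take k) A := by
  intro t ht1 ht2 C hC hle
  rw [List.length_take_of_le hk] at ht2
  rw [List.take_take, min_eq_left ht2] at hle
  obtain ⟨t', ht'1, ht'2, hmod, hle'⟩ : ∃ t', 1 ≤ t' ∧ ∃ _ : t' ≤ α.length,
      t' % α.length = t % k ∧ C ≤ wordAct S.θ (α.take t') A := by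
    rcases ht2.lt_or_eq with htk | rfl
    · exact ⟨t, ht1, (htk.trans_le hk).le, by
        rw [Nat.mod_eq_of_lt (htk.trans_le hk), Nat.mod_eq_of_lt htk], hle⟩
    · exact ⟨α.length, ht1.trans hk, le_rfl, by simp, by rwa [List.take_length, hA, ← hAk]⟩
  refine (hne t' ht'1 ht'2 C hC hle').imp_right fun hΔ => hΔ.trans ?_
  simp [hmod, min_eq_left hk]

end NoExits

/-- Let `(α, A)` be a cycle with no exits, `1 ≤ k < |α|`, and `α' = α₁⋯α_k`.
If `C ⊓ θ_{α'}(C) ≠ ∅` for every non-empty `C ⊆ A`, then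
`(α', A ⊓ θ_{α'}(A))` is a cycle with no exits. -/
theorem sub_cycle {B L : Type*} [GeneralizedBooleanAlgebra B]
    (S : BoolDynSys B L) (α : List L) (A : B)
    (hc : IsCycle S α A) (hne : NoExits S α A)
    (k : ℕ) (hk1 : 1 ≤ k) (hk2 : k < α.length)
    (hmeet : ∀ C : B, C ≠ ⊥ → C ≤ A → C ⊓ wordAct S.θ (α.take k) C ≠ ⊥) :
    IsCycle S (α.take k) (A ⊓ wordAct S.θ (α.take k) A) ∧
      NoExits S (α.take k) (A ⊓ wordAct S.θ (α.take k) A) := by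
  obtain ⟨hα, hA, hfix⟩ := hc
  have hgf : Set.LeftInvOn (wordAct S.θ (α.drop k)) (wordAct S.θ (α.take k)) (Set.Iic A) :=
    fun C (hC : C ≤ A) => by rw [← wordAct_append, List.take_append_drop, hfix C hC]
  have hfg := leftInvOn_of_map_sdiff (wordAct_sdiff S _) (wordAct_sdiff S _) hgf
    fun D hD hD0 => hne.wordAct_drop_ne_bot hk1 hD0 hD
  have hcyc := map_eq_self_of_inf_map_ne_bot (wordAct_sdiff S _) (wordAct_sdiff S _) hgf hfg hmeet
  refine ⟨⟨?_, hmeet A hA le_rfl, hcyc⟩, ?_⟩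
  · simp only [ne_eq, List.take_eq_nil_iff, not_or]
    exact ⟨by omega, hα⟩
  · exact (hne.mono inf_le_left).take hk2.le (hfix _ inf_le_left) (hcyc _ le_rfl)
end

section
/- Let (B, L, θ) be a Boolean dynamical system. If H is a hereditary saturated ideal of B such that the quotient Boolean dynamical system (B/H, L, θ) does not satisfy Condition (L), then there exists a cyclic maximal tail T with T ∩ H = ∅. -/
/-! A cycle `(α, [A₀])` without exits in `B/H` forces every element outside `H` below the
image of `A₀` under the first `u` letters of the periodic word `ααα⋯` to keep following that
word; in particular these word maps are injective modulo `H`. Take an ultrafilter `η ∋ A₀`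
avoiding `H` and the least `g > 0` such that the first `g` letters carry `η ∩ ↓A₀` into `η`.
Injectivity lets `η` be pulled back along `g` letters, so the word has period `g` and returns
of `↓A₀` to `η` happen exactly after multiples of `g` letters, once `A₀` is shrunk inside `η`
to rule out the returns after `0 < u < g` letters. The tail `{C | ∃ β, θ_β(C) ∈ η}` is then
cyclic, and it avoids `H` because `H` is hereditary. -/

section
variable {B L : Type*} [GeneralizedBooleanAlgebra B]

namespace IsBoolIdeal

variable {H : Set B} (hI : IsBoolIdeal H)
include hI

theorem bot_mem : (⊥ : B) ∈ H := by
  obtain ⟨⟨a, ha⟩, -, hinf⟩ := hI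
  simpa using hinf a ha ⊥

theorem mem_of_le {x y : B} (hy : y ∈ H) (hxy : x ≤ y) : x ∈ H := by
  simpa [inf_eq_right.mpr hxy] using hI.2.2 y hy x

theorem sup_mem {x y : B} (hx : x ∈ H) (hy : y ∈ H) : x ⊔ y ∈ H :=
  hI.2.1 x hx y hy

theorem sdiff_mem_trans {x y z : B} (hxy : x \ y ∈ H) (hyz : y \ z ∈ H) : x \ z ∈ H :=
  hI.mem_of_le (hI.sup_mem hxy hyz) (sdiff_triangle x y z)

theorem qle_iff {x y : B} : qle H x y ↔ x \ y ∈ H := by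
  refine ⟨fun ⟨W, hW, hle⟩ => hI.mem_of_le hW ?_, fun h => ⟨x \ y, h, by simp⟩⟩
  simpa using sdiff_le_sdiff_right (c := y) hle

theorem relI_iff {x y : B} : relI H x y ↔ x \ y ∈ H ∧ y \ x ∈ H := by
  refine ⟨fun ⟨a, ha, b, hb, heq⟩ => ⟨hI.mem_of_le hb ?_, hI.mem_of_le ha ?_⟩,
    fun ⟨h₁, h₂⟩ => ⟨y \ x, h₂, x \ y, h₁, by simp [sup_comm]⟩⟩
  · simpa using sdiff_le_sdiff_right (c := y) (heq ▸ le_sup_left : x ≤ y ⊔ b)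
  · simpa using sdiff_le_sdiff_right (c := x) (heq.symm ▸ le_sup_left : y ≤ x ⊔ a)

theorem qle_of_le {x y : B} (h : x ≤ y) : qle H x y :=
  ⟨⊥, hI.bot_mem, by simpa using h⟩

theorem qle_trans {x y z : B} (h₁ : qle H x y) (h₂ : qle H y z) : qle H x z := by
  rw [hI.qle_iff] at *
  exact hI.sdiff_mem_trans h₁ h₂

theorem relI_refl (x : B) : relI H x x :=
  ⟨⊥, hI.bot_mem, ⊥, hI.bot_mem, rfl⟩

theorem relI_symm {x y : B} (h : relI H x y) : relI H y x := by
  rw [hI.relI_iff] at *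
  exact h.symm

theorem relI_trans {x y z : B} (h₁ : relI H x y) (h₂ : relI H y z) : relI H x z := by
  rw [hI.relI_iff] at *
  exact ⟨hI.sdiff_mem_trans h₁.1 h₂.1, hI.sdiff_mem_trans h₂.2 h₁.2⟩

theorem qle_of_relI {x y : B} (h : relI H x y) : qle H x y :=
  (hI.qle_iff).mpr ((hI.relI_iff).mp h).1

theorem qle_of_qle_of_relI {x y z : B} (h₁ : qle H x y) (h₂ : relI H y z) : qle H x z :=
  hI.qle_trans h₁ (hI.qle_of_relI h₂)

theorem exists_ultrafilter {A : B} (hA : A ∉ H) :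
    ∃ η : Set B, IsBoolUltrafilter η ∧ A ∈ η ∧ ∀ x ∈ η, x ∉ H := by
  let I : Order.Ideal B :=
    { carrier := H
      lower' := fun _ _ hle hx => hI.mem_of_le hx hle
      nonempty' := hI.1
      directed' := fun x hx y hy => ⟨x ⊔ y, hI.sup_mem hx hy, le_sup_left, le_sup_right⟩ }
  have hdisj : Disjoint (Order.PFilter.principal A : Set B) (I : Set B) :=
    Set.disjoint_left.mpr fun x hAx hx => hA (hI.mem_of_le hx hAx)
  obtain ⟨J, hJ, hIJ, hJA⟩ := DistribLattice.prime_ideal_of_disjoint_filter_ideal hdisj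
  have hAJ : A ∉ J := Set.disjoint_left.mp hJA (Order.PFilter.mem_principal.mpr le_rfl)
  refine ⟨(J : Set B)ᶜ, ⟨⟨⟨A, hAJ⟩, fun h => h J.bot_mem, ?_, ?_⟩, ?_⟩, hAJ,
    fun x hx hxH => hx (hIJ hxH)⟩
  · exact fun x hx y hxy hy => hx (J.lower hxy hy)
  · exact fun x hx y hy hxy => (hJ.mem_or_mem hxy).elim hx hy
  · rintro a ha b b' rfl
    by_contra! hbb'
    exact ha (Order.Ideal.sup_mem (not_not.mp hbb'.1) (not_not.mp hbb'.2))

end IsBoolIdeal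

namespace BoolDynSys

variable (S : BoolDynSys B L)

@[simp]
theorem wordAct_nil (A : B) : wordAct S.θ [] A = A := rfl

theorem wordAct_cons (a : L) (β : List L) (A : B) :
    wordAct S.θ (a :: β) A = wordAct S.θ β (S.θ a A) := rfl

theorem wordAct_append (β β' : List L) (A : B) :
    wordAct S.θ (β ++ β') A = wordAct S.θ β' (wordAct S.θ β A) := by
  simp [wordAct, List.foldl_append]

theorem wordAct_sup (β : List L) (X Y : B) :
    wordAct S.θ β (X ⊔ Y) = wordAct S.θ β X ⊔ wordAct S.θ β Y := by
  induction β generalizing X Y with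
  | nil => rfl
  | cons a β ih => rw [wordAct_cons, wordAct_cons, wordAct_cons, S.map_sup, ih]

theorem wordAct_sdiff (β : List L) (X Y : B) :
    wordAct S.θ β (X \ Y) = wordAct S.θ β X \ wordAct S.θ β Y := by
  induction β generalizing X Y with
  | nil => rfl
  | cons a β ih => rw [wordAct_cons, wordAct_cons, wordAct_cons, S.map_sdiff, ih]

theorem wordAct_bot (β : List L) : wordAct S.θ β (⊥ : B) = ⊥ := by
  induction β with
  | nil => rfl
  | cons a β ih => rw [wordAct_cons, S.map_bot, ih]

theorem wordAct_mono (β : List L) {X Y : B} (h : X ≤ Y) :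
    wordAct S.θ β X ≤ wordAct S.θ β Y :=
  le_of_sup_eq (by rw [← wordAct_sup, sup_eq_right.mpr h])

variable {S} {H : Set B}

theorem wordAct_mem (hHer : IsHereditary S H) (β : List L) {X : B} (hX : X ∈ H) :
    wordAct S.θ β X ∈ H := by
  induction β generalizing X with
  | nil => exact hX
  | cons a β ih => exact ih (hHer X hX a)

theorem wordAct_qle (hI : IsBoolIdeal H) (hHer : IsHereditary S H) (β : List L) {X Y : B}
    (h : qle H X Y) : qle H (wordAct S.θ β X) (wordAct S.θ β Y) := by
  rw [hI.qle_iff, ← wordAct_sdiff] at *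
  exact wordAct_mem hHer β h

theorem wordAct_relI (hI : IsBoolIdeal H) (hHer : IsHereditary S H) (β : List L) {X Y : B}
    (h : relI H X Y) : relI H (wordAct S.θ β X) (wordAct S.θ β Y) := by
  rw [hI.relI_iff, ← wordAct_sdiff, ← wordAct_sdiff] at *
  exact ⟨wordAct_mem hHer β h.1, wordAct_mem hHer β h.2⟩

end BoolDynSys

namespace IsBoolFilter

variable {η : Set B} (hη : IsBoolFilter η)
include hη

theorem mem_of_le {x y : B} (hx : x ∈ η) (hxy : x ≤ y) : y ∈ η := hη.2.2.1 x hx y hxy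

theorem inf_mem {x y : B} (hx : x ∈ η) (hy : y ∈ η) : x ⊓ y ∈ η := hη.2.2.2 x hx y hy

theorem exists_le_of_finset {ι : Type*} {a : B} (ha : a ∈ η) (s : Finset ι) (f : ι → B)
    (hf : ∀ i ∈ s, f i ∈ η) : ∃ c ∈ η, c ≤ a ∧ ∀ i ∈ s, c ≤ f i := by
  classical
  induction s using Finset.induction_on with
  | empty => exact ⟨a, ha, le_rfl, by simp⟩
  | insert i s _ ih =>
    obtain ⟨c, hc, hca, hcf⟩ := ih fun j hj => hf j (Finset.mem_insert_of_mem hj)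
    refine ⟨c ⊓ f i, hη.inf_mem hc (hf i (Finset.mem_insert_self i s)),
      inf_le_left.trans hca, ?_⟩
    simp only [Finset.mem_insert, forall_eq_or_imp]
    exact ⟨inf_le_right, fun j hj => inf_le_left.trans (hcf j hj)⟩

end IsBoolFilter

namespace IsBoolUltrafilter

variable {η : Set B} (hη : IsBoolUltrafilter η)
include hη

theorem mem_or_sdiff_mem {x : B} (hx : x ∈ η) (y : B) : y ∈ η ∨ x \ y ∈ η :=
  (hη.2 x hx _ _ (sup_inf_sdiff x y).symm).imp_left fun h => hη.1.mem_of_le h inf_le_right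

variable {H : Set B} (hI : IsBoolIdeal H) (hηH : ∀ x ∈ η, x ∉ H)
include hI hηH

theorem mem_of_qle {x y : B} (hx : x ∈ η) (hxy : qle H x y) : y ∈ η :=
  (hη.mem_or_sdiff_mem hx y).resolve_right fun h => hηH _ h (hI.qle_iff.mp hxy)

end IsBoolUltrafilter

def ufTail (S : BoolDynSys B L) (η : Set B) : Set B := {C | ∃ β : List L, wordAct S.θ β C ∈ η}

section ufTail

variable {S : BoolDynSys B L} {η : Set B}

theorem isMaximalTail_ufTail {γ : List L} (hγ : IsUFCycle S γ η) :
    IsMaximalTail S (ufTail S η) := by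
  obtain ⟨hγ, hη, hγη⟩ := hγ
  obtain ⟨⟨A, hA⟩, hbot, hup, -⟩ := hη.1
  refine ⟨⟨A, [], hA⟩, fun ⟨β, hβ⟩ => hbot (S.wordAct_bot β ▸ hβ),
    fun X a ⟨β, hβ⟩ => ⟨a :: β, hβ⟩, fun X Y ⟨β, hβ⟩ => ?_,
    fun X ⟨β, hβ⟩ Y hXY => ⟨β, hup _ hβ _ (S.wordAct_mono β hXY)⟩, fun X ⟨β, hβ⟩ _ => ?_,
    fun X₁ ⟨β₁, h₁⟩ X₂ ⟨β₂, h₂⟩ => ?_⟩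
  · rw [S.wordAct_sup] at hβ
    exact (hη.2 _ hβ _ _ rfl).imp (⟨β, ·⟩) (⟨β, ·⟩)
  · obtain ⟨c, γ', rfl⟩ := List.exists_cons_of_ne_nil hγ
    cases β with
    | cons b β => exact ⟨b, β, hβ⟩
    | nil => exact ⟨c, γ', hγη X hβ⟩
  · exact ⟨_, ⟨[], hη.1.inf_mem h₁ h₂⟩, ⟨β₁, inf_le_left⟩, ⟨β₂, inf_le_right⟩⟩

theorem ufTail_inter_eq_empty {H : Set B} (hHer : IsHereditary S H) (hηH : ∀ x ∈ η, x ∉ H) :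
    ufTail S η ∩ H = ∅ :=
  Set.eq_empty_iff_forall_notMem.mpr fun _ ⟨⟨β, hβ⟩, hH⟩ => hηH _ hβ (S.wordAct_mem hHer β hH)

end ufTail

def wordSeg (w : ℕ → L) (a b : ℕ) : List L := (List.range' a b).map w

section wordSeg

variable (w : ℕ → L)

@[simp]
theorem length_wordSeg (a b : ℕ) : (wordSeg w a b).length = b := by simp [wordSeg]

@[simp]
theorem wordSeg_zero (a : ℕ) : wordSeg w a 0 = [] := rfl

theorem wordSeg_succ (a b : ℕ) : wordSeg w a (b + 1) = w a :: wordSeg w (a + 1) b := by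
  simp [wordSeg, List.range'_succ]

theorem wordSeg_add (a b c : ℕ) :
    wordSeg w a (b + c) = wordSeg w a b ++ wordSeg w (a + b) c := by
  simp only [wordSeg, ← List.range'_append, one_mul, List.map_append]

theorem wordSeg_add_left {p : ℕ} (hp : ∀ j, w (p + j) = w j) (a b : ℕ) :
    wordSeg w (p + a) b = wordSeg w a b := by
  rw [wordSeg, ← List.map_add_range', List.map_map]
  exact List.map_congr_left fun j _ => hp j

end wordSeg

def periodicWord (α : List L) (hα : α ≠ []) (t : ℕ) : L :=
  α.get ⟨t % α.length, Nat.mod_lt t (List.length_pos_of_ne_nil hα)⟩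

section periodicWord

variable {α : List L} (hα : α ≠ [])

theorem periodicWord_eq_of_modEq {s t : ℕ} (h : s ≡ t [MOD α.length]) :
    periodicWord α hα s = periodicWord α hα t := by
  simp only [periodicWord, show s % α.length = t % α.length from h]

theorem wordSeg_periodicWord_eq_take {t : ℕ} (ht : t ≤ α.length) :
    wordSeg (periodicWord α hα) 0 t = α.take t := by
  refine List.ext_getElem (by simpa using ht) fun i hi _ => ?_
  have hi : i < α.length := by simp at hi; omega
  simp [wordSeg, periodicWord, Nat.mod_eq_of_lt hi]

theorem wordSeg_periodicWord_length_add (s : ℕ) :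
    wordSeg (periodicWord α hα) 0 (α.length + s) = α ++ wordSeg (periodicWord α hα) 0 s := by
  rw [wordSeg_add, wordSeg_periodicWord_eq_take hα le_rfl, List.take_length, zero_add,
    ← add_zero α.length,
    wordSeg_add_left _ fun j => periodicWord_eq_of_modEq hα (by simp [Nat.ModEq])]

end periodicWord

theorem wordSeg_mul_eq_wordPow (w : ℕ → L) {p : ℕ} (hp : ∀ b, wordSeg w p b = wordSeg w 0 b)
    (k : ℕ) : wordSeg w 0 (k * p) = wordPow (wordSeg w 0 p) k := by
  induction k with
  | zero => simp [wordPow]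
  | succ k ih =>
    rw [add_mul, one_mul, add_comm, wordSeg_add, zero_add, hp, ih]
    simp [wordPow, List.replicate_succ]

theorem BoolDynSys.wordAct_wordSeg_add (S : BoolDynSys B L) (w : ℕ → L) (b c : ℕ) (X : B) :
    wordAct S.θ (wordSeg w 0 (b + c)) X =
      wordAct S.θ (wordSeg w b c) (wordAct S.θ (wordSeg w 0 b) X) := by
  rw [wordSeg_add, S.wordAct_append, zero_add]

structure QCycleWithoutExit (S : BoolDynSys B L) (H : Set B) (α : List L) (A₀ : B) : Prop where
  ideal : IsBoolIdeal H
  hereditary : IsHereditary S H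
  cycle : QCycle S H α A₀
  noExit : ¬ QHasExit S H α A₀

namespace QCycleWithoutExit

variable {S : BoolDynSys B L} {H : Set B} {α : List L} {A₀ : B}
  (h : QCycleWithoutExit S H α A₀)
include h

def word : ℕ → L := periodicWord α h.cycle.1

local notation "θ[" a ", " b "]" => wordAct S.θ (wordSeg h.word a b)

theorem length_pos : 0 < α.length := List.length_pos_of_ne_nil h.cycle.1

theorem qle_wordAct_wordSeg {u : ℕ} {X : B} (hX : qle H X (θ[0, u] A₀)) (j : ℕ) :
    qle H (θ[u, j] X) (θ[0, u + j] A₀) := by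
  rw [S.wordAct_wordSeg_add]
  exact BoolDynSys.wordAct_qle h.ideal h.hereditary _ hX

theorem relI_wordAct_add_of_dvd {C : B} (hC : qle H C A₀) {m : ℕ} (hm : α.length ∣ m) (t : ℕ) :
    relI H (θ[0, m + t] C) (θ[0, t] C) := by
  obtain ⟨k, rfl⟩ := hm
  induction k with
  | zero => simpa using h.ideal.relI_refl _
  | succ k ih =>
    rw [mul_add_one, add_comm _ α.length, add_assoc, word, wordSeg_periodicWord_length_add,
      S.wordAct_append]
    exact h.ideal.relI_trans
      (BoolDynSys.wordAct_relI h.ideal h.hereditary _ (h.cycle.2.2 C hC)) ih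

theorem relI_wordAct_of_modEq {C : B} (hC : qle H C A₀) {s t : ℕ} (hst : s ≡ t [MOD α.length]) :
    relI H (θ[0, s] C) (θ[0, t] C) := by
  wlog hts : t ≤ s generalizing s t
  · exact h.ideal.relI_symm (this hst.symm (by omega))
  have := h.relI_wordAct_add_of_dvd hC ((Nat.modEq_iff_dvd' hts).mp hst.symm) t
  rwa [Nat.sub_add_cancel hts] at this

theorem qDelta_eq {u : ℕ} {X : B} (hX : X ∉ H) (hXu : qle H X (θ[0, u] A₀)) :
    QDelta S H X = {h.word u} := by
  obtain ⟨t, ht1, htn, htu⟩ : ∃ t, 1 ≤ t ∧ t ≤ α.length ∧ t ≡ u [MOD α.length] := by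
    rcases Nat.eq_zero_or_pos (u % α.length) with h0 | hpos
    · exact ⟨α.length, h.length_pos, le_rfl, by simp [Nat.ModEq, h0]⟩
    · exact ⟨u % α.length, hpos, (Nat.mod_lt _ h.length_pos).le, Nat.mod_modEq u _⟩
  have hXt : qle H X (wordAct S.θ (α.take t) A₀) := by
    rw [← wordSeg_periodicWord_eq_take h.cycle.1 htn]
    exact h.ideal.qle_of_qle_of_relI hXu
      (h.relI_wordAct_of_modEq (h.ideal.qle_of_le le_rfl) htu.symm)
  by_contra hne
  refine h.noExit ⟨t, ht1, htn, X, hX, hXt, ?_⟩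
  change QDelta S H X ≠ {periodicWord α h.cycle.1 t}
  rwa [periodicWord_eq_of_modEq h.cycle.1 htu]

theorem wordAct_wordSeg_notMem {u : ℕ} {X : B} (hX : X ∉ H) (hXu : qle H X (θ[0, u] A₀))
    (j : ℕ) : θ[u, j] X ∉ H := by
  induction j generalizing u X with
  | zero => exact hX
  | succ j ih =>
    have hwu : h.word u ∈ QDelta S H X := by rw [h.qDelta_eq hX hXu]; rfl
    rw [wordSeg_succ, S.wordAct_cons]
    exact ih hwu (h.qle_wordAct_wordSeg hXu 1)

theorem eq_wordSeg_of_wordAct_notMem {u : ℕ} {X : B} (hXu : qle H X (θ[0, u] A₀))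
    {β : List L} (hβ : wordAct S.θ β X ∉ H) : β = wordSeg h.word u β.length := by
  induction β generalizing u X with
  | nil => rfl
  | cons b β ih =>
    rw [S.wordAct_cons] at hβ
    have hb : S.θ b X ∉ H := fun hb => hβ (BoolDynSys.wordAct_mem h.hereditary β hb)
    have hX : X ∉ H := fun hX => hb (h.hereditary X hX b)
    have hbu : b ∈ QDelta S H X := hb
    rw [h.qDelta_eq hX hXu, Set.mem_singleton_iff] at hbu
    subst hbu
    rw [List.length_cons, wordSeg_succ, ← ih (h.qle_wordAct_wordSeg hXu 1) hβ]

theorem wordSeg_eq_of_qle_of_qle {s t : ℕ} {E : B} (hE : E ∉ H) (hs : qle H E (θ[0, s] A₀))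
    (ht : qle H E (θ[0, t] A₀)) (j : ℕ) : wordSeg h.word s j = wordSeg h.word t j := by
  simpa using h.eq_wordSeg_of_wordAct_notMem ht (h.wordAct_wordSeg_notMem hE hs j)

def Returns (η : Set B) (t : ℕ) : Prop := ∀ X ∈ η, X ≤ A₀ → θ[0, t] X ∈ η

variable {η : Set B} (hη : IsBoolUltrafilter η) (hηA : A₀ ∈ η) (hηH : ∀ x ∈ η, x ∉ H)

section
include hη hηA

theorem isUFCycle_of_returns {g : ℕ} (hg0 : 0 < g) (hg : h.Returns η g) :
    IsUFCycle S (wordSeg h.word 0 g) η :=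
  ⟨List.ne_nil_of_length_pos (by simpa using hg0), hη, fun X hX =>
    hη.1.mem_of_le (hg _ (hη.1.inf_mem hX hηA) inf_le_right) (S.wordAct_mono _ inf_le_left)⟩

theorem exists_mem_forall_wordAct_notMem {g : ℕ}
    (hmin : ∀ u, 0 < u → u < g → ¬ h.Returns η u) :
    ∃ A ∈ η, A ≤ A₀ ∧ ∀ u, 0 < u → u < g → θ[0, u] A ∉ η := by
  have hX : ∀ u ∈ Finset.Ioo 0 g, ∃ X ∈ η, X ≤ A₀ ∧ θ[0, u] X ∉ η := by
    intro u hu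
    obtain ⟨hu0, hug⟩ := Finset.mem_Ioo.mp hu
    simpa [Returns] using hmin u hu0 hug
  choose! X hXη hXA hXu using hX
  obtain ⟨A, hA, hAA₀, hAX⟩ := hη.1.exists_le_of_finset hηA (Finset.Ioo 0 g) X hXη
  refine ⟨A, hA, hAA₀, fun u hu0 hug hAu => ?_⟩
  have hu := Finset.mem_Ioo.mpr ⟨hu0, hug⟩
  exact hXu u hu (hη.1.mem_of_le hAu (S.wordAct_mono _ (hAX u hu)))

end

include hη hηH

theorem returns_length : h.Returns η α.length := by
  intro X hX hXA
  rw [word, wordSeg_periodicWord_eq_take h.cycle.1 le_rfl, List.take_length]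
  exact hη.mem_of_qle h.ideal hηH hX
    (h.ideal.qle_of_relI (h.ideal.relI_symm (h.cycle.2.2 X (h.ideal.qle_of_le hXA))))

theorem exists_returns_min :
    ∃ g, 0 < g ∧ h.Returns η g ∧ ∀ u, 0 < u → u < g → ¬ h.Returns η u := by
  classical
  have hex : ∃ g, 0 < g ∧ h.Returns η g := ⟨_, h.length_pos, h.returns_length hη hηH⟩
  exact ⟨Nat.find hex, (Nat.find_spec hex).1, (Nat.find_spec hex).2,
    fun u hu0 hug hu => Nat.find_min hex hug ⟨hu0, hu⟩⟩

include hηA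

theorem wordSeg_eq_of_returns {t : ℕ} (ht : h.Returns η t) (j : ℕ) :
    wordSeg h.word t j = wordSeg h.word 0 j := by
  have hE : A₀ ⊓ θ[0, t] A₀ ∈ η := hη.1.inf_mem hηA (ht A₀ hηA le_rfl)
  exact h.wordSeg_eq_of_qle_of_qle (hηH _ hE) (h.ideal.qle_of_le inf_le_right)
    (h.ideal.qle_of_le inf_le_left) j

theorem mem_wordAct_wordSeg_of_returns {u : ℕ} (hu : h.Returns η u) {E : B} (hE : E ∈ η)
    (hEu : qle H E (θ[0, u] A₀)) {m : ℕ} (hm : α.length ∣ u + m) : θ[u, m] E ∈ η := by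
  set D := θ[u, m] E
  have hDA : qle H D A₀ := h.ideal.qle_of_qle_of_relI (h.qle_wordAct_wordSeg hEu m)
    (by simpa using h.relI_wordAct_add_of_dvd (h.ideal.qle_of_le le_rfl) hm 0)
  have hDD : D \ θ[0, u + m] D ∈ H :=
    (h.ideal.relI_iff.mp (by simpa using h.relI_wordAct_add_of_dvd hDA hm 0)).2
  -- Otherwise `A₀ \ D ∈ η` returns to `η` after `u` letters, where it meets `E` only in `H`:
  -- `E` lies below the image of `D` modulo `H`, since `θ[u, m]` is injective modulo `H`.
  by_contra hD
  have hR : E \ θ[0, u] D ∈ H := by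
    by_contra hR
    refine h.wordAct_wordSeg_notMem hR (h.ideal.qle_trans (h.ideal.qle_of_le sdiff_le) hEu) m ?_
    rwa [S.wordAct_sdiff, ← S.wordAct_wordSeg_add]
  have hAD : A₀ \ D ∈ η := (hη.mem_or_sdiff_mem hηA D).resolve_left hD
  have hmem : E ⊓ θ[0, u] (A₀ \ D) ∈ η := hη.1.inf_mem hE (hu _ hAD sdiff_le)
  refine hηH _ hmem (h.ideal.mem_of_le hR ?_)
  rw [S.wordAct_sdiff]
  exact le_sdiff.mpr ⟨inf_le_left, disjoint_sdiff_self_left.mono_left inf_le_right⟩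

theorem mem_of_mem_add_of_returns {g : ℕ} (hg : h.Returns η g) {X : B} (hXA : X ≤ A₀) {v : ℕ}
    (hv : θ[0, v + g] X ∈ η) : θ[0, v] X ∈ η := by
  obtain ⟨k, hk⟩ := Nat.exists_eq_add_one_of_ne_zero h.length_pos.ne'
  have hm : α.length ∣ g + k * g := ⟨g, by rw [hk]; ring⟩
  set E := θ[0, v + g] X ⊓ θ[0, g] A₀
  have hE : E ∈ η := hη.1.inf_mem hv (hg A₀ hηA le_rfl)
  have hEg : qle H E (θ[0, g] A₀) := h.ideal.qle_of_le inf_le_right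
  have hEv : qle H E (θ[0, v + g] A₀) :=
    h.ideal.qle_of_le (inf_le_left.trans (S.wordAct_mono _ hXA))
  have hD := h.mem_wordAct_wordSeg_of_returns hη hηA hηH hg hE hEg hm
  rw [h.wordSeg_eq_of_qle_of_qle (hηH _ hE) hEg hEv] at hD
  have hle : θ[v + g, k * g] E ≤ θ[0, v + g + k * g] X := by
    rw [S.wordAct_wordSeg_add]
    exact S.wordAct_mono _ inf_le_left
  have hrel := h.relI_wordAct_add_of_dvd (h.ideal.qle_of_le hXA) hm v
  rw [add_comm _ v, ← add_assoc] at hrel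
  exact hη.mem_of_qle h.ideal hηH (hη.1.mem_of_le hD hle) (h.ideal.qle_of_relI hrel)

theorem mem_mod_of_returns {g : ℕ} (hg : h.Returns η g) {X : B} (hXA : X ≤ A₀) {v : ℕ}
    (hv : θ[0, v] X ∈ η) : θ[0, v % g] X ∈ η := by
  rw [← Nat.mod_add_div v g] at hv
  generalize v / g = k at hv
  induction k with
  | zero => simpa using hv
  | succ k ih =>
    rw [mul_add_one, ← add_assoc] at hv
    exact ih (h.mem_of_mem_add_of_returns hη hηA hηH hg hXA hv)

theorem mem_and_eq_wordPow {g : ℕ} (hg0 : 0 < g) (hg : h.Returns η g) {A : B} (hAA₀ : A ≤ A₀)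
    (hA : ∀ u, 0 < u → u < g → θ[0, u] A ∉ η) {β : List L} (hβ : β ≠ []) {C : B} (hCA : C ≤ A)
    (hC : wordAct S.θ β C ∈ η) :
    C ∈ η ∧ ∃ k : ℕ, 0 < k ∧ β = wordPow (wordSeg h.word 0 g) k := by
  have hCA₀ := hCA.trans hAA₀
  have hβw : β = wordSeg h.word 0 β.length :=
    h.eq_wordSeg_of_wordAct_notMem (h.ideal.qle_of_le hCA₀) (hηH _ hC)
  have hmod := h.mem_mod_of_returns hη hηA hηH hg hCA₀ (hβw ▸ hC)
  have hr : β.length % g = 0 := by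
    by_contra hr
    exact hA _ (Nat.pos_of_ne_zero hr) (Nat.mod_lt _ hg0)
      (hη.1.mem_of_le hmod (S.wordAct_mono _ hCA))
  rw [hr] at hmod
  have hgβ : g ∣ β.length := Nat.dvd_of_mod_eq_zero hr
  have hk : 0 < β.length / g := Nat.div_pos (Nat.le_of_dvd (List.length_pos_iff.mpr hβ) hgβ) hg0
  refine ⟨hmod, β.length / g, hk, ?_⟩
  calc β = wordSeg h.word 0 (β.length / g * g) := by rwa [Nat.div_mul_cancel hgβ]
    _ = wordPow (wordSeg h.word 0 g) (β.length / g) :=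
      wordSeg_mul_eq_wordPow _ (h.wordSeg_eq_of_returns hη hηA hηH hg) _

end QCycleWithoutExit

end

theorem cyclic_tail_of_quotient_not_L_general {B L : Type*} [GeneralizedBooleanAlgebra B]
    (S : BoolDynSys B L) (H : Set B) (hIdeal : IsBoolIdeal H)
    (hHer : IsHereditary S H)
    (hL : ¬ QConditionL S H) :
    ∃ T : Set B, IsCyclicMaximalTail S T ∧ T ∩ H = ∅ := by
  obtain ⟨α, A₀, hcyc, hnex⟩ : ∃ α A₀, QCycle S H α A₀ ∧ ¬ QHasExit S H α A₀ := by
    simpa [QConditionL] using hL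
  have h : QCycleWithoutExit S H α A₀ := ⟨hIdeal, hHer, hcyc, hnex⟩
  obtain ⟨η, hη, hηA, hηH⟩ := hIdeal.exists_ultrafilter hcyc.2.1
  obtain ⟨g, hg0, hg, hmin⟩ := h.exists_returns_min hη hηH
  obtain ⟨A, hA, hAA₀, hAg⟩ := h.exists_mem_forall_wordAct_notMem hη hηA hmin
  have hγ := h.isUFCycle_of_returns hη hηA hg0 hg
  exact ⟨ufTail S η, ⟨isMaximalTail_ufTail hγ, _, η, A, hγ, rfl, hA,
    fun β hβ C hCA hC => h.mem_and_eq_wordPow hη hηA hηH hg0 hg hAA₀ hAg hβ hCA hC⟩,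
    ufTail_inter_eq_empty hHer hηH⟩

/-- If `H` is a hereditary saturated ideal of `B` such that the quotient Boolean
dynamical system `(B/H, L, θ)` does not satisfy Condition (L), then there exists
a cyclic maximal tail `T` with `T ∩ H = ∅`. -/
theorem cyclic_tail_of_quotient_not_L {B L : Type*} [GeneralizedBooleanAlgebra B]
    (S : BoolDynSys B L) (H : Set B) (hIdeal : IsBoolIdeal H)
    (hHer : IsHereditary S H) (hSat : IsSaturated S H)
    (hL : ¬ QConditionL S H) :
    ∃ T : Set B, IsCyclicMaximalTail S T ∧ T ∩ H = ∅ :=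
  cyclic_tail_of_quotient_not_L_general S H hIdeal hHer hL
end
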